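/- arXiv:0905.0615 — 2 statements merged into one kernel-verified Lean document; each statement's English description precedes it below -/
import Mathlib

section
/- For every x ∈ X, the function φ_x = φ(x,·) is a pointwise limit of continuous critical sub-solutions; moreover, for every neighborhood V of x, the approximating continuous critical sub-solutions can be chosen to converge to φ_x uniformly on X ∖ V. -/
open Metric Set Filter Topology

/-- `X` is a `B`-length space at scale `K`. -/
def IsBLengthSpaceAtScale (X : Type*) [MetricSpace X] (B K : ℝ) : Prop :=
  ∀ x y : X, ∃ (n : ℕ) (p : ℕ → X), p 0 = x ∧ p n = y ∧
    (∀ i < n, dist (p i) (p (i + 1)) ≤ K) ∧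
    ∑ i ∈ Finset.range n, dist (p i) (p (i + 1)) ≤ B * dist x y

/-- Uniform superlinearity of the cost `c`. -/
def UniformlySuperlinear {X : Type*} [MetricSpace X] (c : X → X → ℝ) : Prop :=
  ∀ k : ℝ, 0 ≤ k → ∃ C : ℝ, ∀ x y : X, k * dist x y - C ≤ c x y

/-- Uniform boundedness of the cost `c`. -/
def UniformlyBounded {X : Type*} [MetricSpace X] (c : X → X → ℝ) : Prop :=
  ∀ R : ℝ, ∃ A : ℝ, ∀ x y : X, dist x y ≤ R → c x y ≤ A

/-- `u` is `α`-dominated: `u y - u x ≤ c x y + α` for all `x y`. -/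
def Dominated {X : Type*} (c : X → X → ℝ) (α : ℝ) (u : X → ℝ) : Prop :=
  ∀ x y : X, u y - u x ≤ c x y + α

/-- Negative Lax-Oleinik semigroup. -/
noncomputable def Tm {X : Type*} (c : X → X → ℝ) (u : X → ℝ) (x : X) : ℝ :=
  ⨅ y, (u y + c y x)

/-- Positive Lax-Oleinik semigroup. -/
noncomputable def Tp {X : Type*} (c : X → X → ℝ) (u : X → ℝ) (x : X) : ℝ :=
  ⨆ y, (u y - c x y)

/-- The critical constant `α[0]`: the smallest `α` for which `α`-dominated functions exist. -/
noncomputable def critValue {X : Type*} (c : X → X → ℝ) : ℝ :=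
  sInf {α : ℝ | ∃ u : X → ℝ, Dominated c α u}

/-- The Mañé potential `φ(x,y) = sup_u (u y - u x)`, sup over critical sub-solutions. -/
noncomputable def mane {X : Type*} (c : X → X → ℝ) (x y : X) : ℝ :=
  sSup {r : ℝ | ∃ u : X → ℝ, Dominated c (critValue c) u ∧ r = u y - u x}

/-- A bi-infinite sequence is `(u,c,α)`-calibrated if all its finite subchains of
consecutive terms are calibrated. -/
def IsCalibrated {X : Type*} (c : X → X → ℝ) (α : ℝ) (u : X → ℝ) (x : ℤ → X) : Prop :=
  ∀ (m : ℤ) (k : ℕ), u (x (m + k)) =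
    u (x m) + (∑ i ∈ Finset.range k, c (x (m + i)) (x (m + i + 1))) + k * α

/-- The projected Aubry set of a critical sub-solution `u`. -/
def projAubry {X : Type*} (c : X → X → ℝ) (u : X → ℝ) : Set X :=
  {p : X | ∃ x : ℤ → X, IsCalibrated c (critValue c) u x ∧ x 0 = p}

/-- The set `Â_u` of pairs of consecutive terms of calibrated bi-infinite sequences. -/
def aubryPairs {X : Type*} (c : X → X → ℝ) (u : X → ℝ) : Set (X × X) :=
  {q : X × X | ∃ (x : ℤ → X) (n : ℤ),
    IsCalibrated c (critValue c) u x ∧ x n = q.1 ∧ x (n + 1) = q.2}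

/-- The projected Aubry set `A = ∩_u A_u`, intersection over all critical sub-solutions. -/
def projAubrySet {X : Type*} (c : X → X → ℝ) : Set X :=
  {p : X | ∀ u : X → ℝ, Dominated c (critValue c) u → p ∈ projAubry c u}

/-- The Aubry pair set `Â = ∩_u Â_u`, intersection over all critical sub-solutions. -/
def aubryPairsSet {X : Type*} (c : X → X → ℝ) : Set (X × X) :=
  {q : X × X | ∀ u : X → ℝ, Dominated c (critValue c) u → q ∈ aubryPairs c u}

/-- `c_n(x,y)`: infimum of total cost over chains of length `n` from `x` to `y`. -/
noncomputable def cChain {X : Type*} (c : X → X → ℝ) (n : ℕ) (x y : X) : ℝ :=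
  sInf {r : ℝ | ∃ p : ℕ → X, p 0 = x ∧ p n = y ∧
    r = ∑ i ∈ Finset.range n, c (p i) (p (i + 1))}

/-- `φ_n(x,y) = inf_{k ≥ n} (c_k(x,y) + k·α)`. -/
noncomputable def phiN {X : Type*} (c : X → X → ℝ) (α : ℝ) (n : ℕ) (x y : X) : ℝ :=
  sInf {r : ℝ | ∃ k : ℕ, n ≤ k ∧ r = cChain c k x y + k * α}

/-- The Peierls barrier, with values in the extended reals. -/
noncomputable def peierls {X : Type*} (c : X → X → ℝ) (α : ℝ) (x y : X) : EReal :=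
  Filter.liminf (fun n : ℕ => ((cChain c n x y + n * α : ℝ) : EReal)) Filter.atTop

/-- Negative Lax-Oleinik semigroup on extended-real-valued functions. -/
noncomputable def eTm {X : Type*} (c : X → X → ℝ) (u : X → EReal) (x : X) : EReal :=
  ⨅ y, (u y + (c y x : EReal))

/-- Positive Lax-Oleinik semigroup on extended-real-valued functions. -/
noncomputable def eTp {X : Type*} (c : X → X → ℝ) (u : X → EReal) (x : X) : EReal :=
  ⨆ y, (u y - (c x y : EReal))

/-!
`φ_x` is the infimum of the `α₀`-corrected costs of chains starting at `x`; hence it is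
`α₀`-dominated, vanishes at `x`, and (in a `B`-length space) is coarsely Lipschitz. Its
Lax–Oleinik image `v = Tm c (φ_x + α₀)` agrees with `φ_x` away from `x` and is continuous,
because superlinearity confines the infimum to a compact set on which `c` is uniformly continuous.
So the only defect of `φ_x` sits at `x`, and it is removed by capping `v` with a steep cone
`ε + N * dist x ·`: near `x` this keeps domination because `Tp c v` is continuous and at most
`α₀` at `x`, far from `x` the cone lies above `v`. With `ε = 1/(n+1)` the approximants coincide with
`φ_x` outside the ball of radius `1/(n+1)`.
-/

section CostFunctions

variable {X : Type*} {c : X → X → ℝ}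

section Domination

open Finset

variable {α : ℝ} {u : X → ℝ}

lemma Dominated.sub_le_sum (hu : Dominated c α u) (p : ℕ → X) (k : ℕ) :
    u (p k) - u (p 0) ≤ ∑ i ∈ range k, c (p i) (p (i + 1)) + k * α :=
  calc u (p k) - u (p 0) = ∑ i ∈ range k, (u (p (i + 1)) - u (p i)) :=
        (sum_range_sub (fun i => u (p i)) k).symm
    _ ≤ ∑ i ∈ range k, (c (p i) (p (i + 1)) + α) := sum_le_sum fun i _ => hu _ _
    _ = _ := by rw [sum_add_distrib, sum_const, card_range, nsmul_eq_mul]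

lemma Dominated.mono {β : ℝ} (hu : Dominated c α u) (hαβ : α ≤ β) : Dominated c β u :=
  fun a b => (hu a b).trans (by linarith)

lemma exists_dominated_critValue_add [MetricSpace X] [Nonempty X] (hsl : UniformlySuperlinear c)
    {ε : ℝ} (hε : 0 < ε) : ∃ u : X → ℝ, Dominated c (critValue c + ε) u := by
  have hne : {α : ℝ | ∃ u : X → ℝ, Dominated c α u}.Nonempty := by
    obtain ⟨C, hC⟩ := hsl 0 le_rfl
    exact ⟨C, 0, fun a b => by simp only [Pi.zero_apply, sub_self]; linarith [hC a b]⟩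
  have hbdd : BddBelow {α : ℝ | ∃ u : X → ℝ, Dominated c α u} := by
    obtain ⟨x₀⟩ := ‹Nonempty X›
    exact ⟨-c x₀ x₀, fun α ⟨u, hu⟩ => by linarith [hu x₀ x₀]⟩
  obtain ⟨α, ⟨u, hu⟩, hlt⟩ := (csInf_lt_iff hbdd hne).mp (lt_add_of_pos_right (critValue c) hε)
  exact ⟨u, hu.mono hlt.le⟩

lemma sum_add_mul_critValue_nonneg_of_cycle [MetricSpace X] (hsl : UniformlySuperlinear c)
    {p : ℕ → X} {k : ℕ} (hp : p k = p 0) :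
    0 ≤ ∑ i ∈ range k, c (p i) (p (i + 1)) + k * critValue c := by
  have : Nonempty X := ⟨p 0⟩
  refine le_of_forall_pos_le_add fun ε hε => ?_
  obtain ⟨u, hu⟩ := exists_dominated_critValue_add hsl (div_pos hε (Nat.cast_add_one_pos k))
  have htel := hu.sub_le_sum p k
  rw [hp, sub_self] at htel
  have hk : k * (ε / (k + 1)) ≤ ε := by
    rw [mul_div_assoc', div_le_iff₀ (Nat.cast_add_one_pos k)]
    linarith
  linarith

end Domination

section Potential

open Finset

def chainCosts (c : X → X → ℝ) (x y : X) : Set ℝ :=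
  {r | ∃ (k : ℕ) (p : ℕ → X), p 0 = x ∧ p k = y ∧
    r = ∑ i ∈ range k, c (p i) (p (i + 1)) + k * critValue c}

variable {x y : X} {r : ℝ}

lemma zero_mem_chainCosts (x : X) : (0 : ℝ) ∈ chainCosts c x x :=
  ⟨0, fun _ => x, rfl, rfl, by simp⟩

lemma chainCosts_append {a : X} (hr : r ∈ chainCosts c x a) (b : X) :
    r + c a b + critValue c ∈ chainCosts c x b := by
  obtain ⟨k, p, hp0, hpk, rfl⟩ := hr
  refine ⟨k + 1, fun i => if i ≤ k then p i else b, by simpa using hp0, by simp, ?_⟩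
  have hprefix : ∑ i ∈ range k, c (if i ≤ k then p i else b) (if i + 1 ≤ k then p (i + 1) else b)
      = ∑ i ∈ range k, c (p i) (p (i + 1)) :=
    sum_congr rfl fun i hi => by
      rw [Finset.mem_range] at hi
      rw [if_pos hi.le, if_pos (Nat.succ_le_of_lt hi)]
  rw [sum_range_succ, hprefix]
  dsimp only
  rw [if_pos le_rfl, if_neg (by omega), hpk]
  push_cast
  ring

lemma chainCosts_nonempty (x y : X) : (chainCosts c x y).Nonempty :=
  ⟨_, chainCosts_append (zero_mem_chainCosts x) y⟩

lemma exists_mem_chainCosts_of_ne (hr : r ∈ chainCosts c x y) (hyx : y ≠ x) :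
    ∃ z, ∃ r' ∈ chainCosts c x z, r = r' + c z y + critValue c := by
  obtain ⟨k, p, hp0, hpk, rfl⟩ := hr
  cases k with
  | zero => exact absurd (hpk.symm.trans hp0) hyx
  | succ k =>
    refine ⟨p k, _, ⟨k, p, hp0, rfl, rfl⟩, ?_⟩
    rw [sum_range_succ, hpk]
    push_cast
    ring

lemma nonneg_of_mem_chainCosts_self [MetricSpace X] (hsl : UniformlySuperlinear c)
    (hr : r ∈ chainCosts c x x) : 0 ≤ r := by
  obtain ⟨k, p, hp0, hpk, rfl⟩ := hr
  exact sum_add_mul_critValue_nonneg_of_cycle hsl (hpk.trans hp0.symm)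

lemma chainCosts_bddBelow [MetricSpace X] (hsl : UniformlySuperlinear c) (x y : X) :
    BddBelow (chainCosts c x y) :=
  ⟨-(c y x + critValue c), fun r hr => by
    linarith [nonneg_of_mem_chainCosts_self hsl (chainCosts_append hr x)]⟩

noncomputable def chainPot (c : X → X → ℝ) (x y : X) : ℝ :=
  sInf (chainCosts c x y)

lemma Dominated.sub_le_chainPot {u : X → ℝ} (hu : Dominated c (critValue c) u) (x y : X) :
    u y - u x ≤ chainPot c x y := by
  refine le_csInf (chainCosts_nonempty x y) ?_
  rintro r ⟨k, p, rfl, rfl, rfl⟩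
  exact hu.sub_le_sum p k

variable [MetricSpace X]

lemma chainPot_le (hsl : UniformlySuperlinear c) (hr : r ∈ chainCosts c x y) :
    chainPot c x y ≤ r :=
  csInf_le (chainCosts_bddBelow hsl x y) hr

lemma chainPot_self (hsl : UniformlySuperlinear c) (x : X) : chainPot c x x = 0 :=
  le_antisymm (chainPot_le hsl (zero_mem_chainCosts x))
    (le_csInf (chainCosts_nonempty x x) fun _ hr => nonneg_of_mem_chainCosts_self hsl hr)

lemma dominated_chainPot (hsl : UniformlySuperlinear c) (x : X) :
    Dominated c (critValue c) (chainPot c x) := by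
  intro a b
  have : chainPot c x b - c a b - critValue c ≤ chainPot c x a :=
    le_csInf (chainCosts_nonempty x a) fun r hr => by
      linarith [chainPot_le hsl (chainCosts_append hr b)]
  linarith

lemma mane_eq_chainPot (hsl : UniformlySuperlinear c) (x : X) : mane c x = chainPot c x :=
  funext fun y => IsGreatest.csSup_eq
    ⟨⟨chainPot c x, dominated_chainPot hsl x, by rw [chainPot_self hsl, sub_zero]⟩,
      fun _ ⟨_, hu, hr⟩ => hr ▸ hu.sub_le_chainPot x y⟩

end Potential

section CoarselyLipschitz

open Finset

variable [MetricSpace X] {u w : X → ℝ}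

def CoarselyLipschitz (w : X → ℝ) : Prop :=
  ∃ M L : ℝ, 0 ≤ L ∧ ∀ a b, w a - w b ≤ M + L * dist a b

lemma CoarselyLipschitz.neg (hw : CoarselyLipschitz w) : CoarselyLipschitz (-w) := by
  obtain ⟨M, L, hL, h⟩ := hw
  refine ⟨M, L, hL, fun a b => ?_⟩
  simp only [Pi.neg_apply, neg_sub_neg]
  rw [dist_comm]
  exact h b a

lemma CoarselyLipschitz.add_const (hw : CoarselyLipschitz w) (t : ℝ) :
    CoarselyLipschitz fun z => w z + t := by
  obtain ⟨M, L, hL, h⟩ := hw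
  exact ⟨M, L, hL, fun a b => by simpa using h a b⟩

/-- Greedy anchors: the anchor `p j` moves to `p (m + 1)` only once the chain length from `p j`
exceeds `K`, and each move costs at most `2E` (one jump of length `≤ K`, one step). -/
lemma sub_le_of_chain {K E : ℝ} (hK : 0 < K) (hloc : ∀ a b, dist a b ≤ K → u b - u a ≤ E)
    {n : ℕ} {p : ℕ → X} (hp : ∀ i < n, dist (p i) (p (i + 1)) ≤ K) :
    u (p n) - u (p 0) ≤ E + 2 * E / K * ∑ i ∈ range n, dist (p i) (p (i + 1)) := by
  set d := fun i => dist (p i) (p (i + 1))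
  have hd : ∀ i, 0 ≤ d i := fun i => dist_nonneg
  have hE : 0 ≤ E := by simpa using hloc (p 0) (p 0) (by simpa using hK.le)
  have hEK : 0 ≤ 2 * E / K := by positivity
  have anchor : ∀ m ≤ n, ∃ j ≤ m, ∑ i ∈ Ico j m, d i ≤ K ∧
      u (p j) - u (p 0) ≤ 2 * E / K * ∑ i ∈ range j, d i := by
    intro m
    induction m with
    | zero => exact fun _ => ⟨0, le_rfl, by simpa using hK.le, by simp⟩
    | succ m ih =>
      intro hm
      obtain ⟨j, hjm, hjK, hj⟩ := ih (by omega)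
      by_cases hnext : ∑ i ∈ Ico j m, d i + d m ≤ K
      · exact ⟨j, by omega, by rwa [sum_Ico_succ_top hjm], hj⟩
      refine ⟨m + 1, le_rfl, by simpa using hK.le, ?_⟩
      have hjump : u (p m) - u (p j) ≤ E := hloc _ _ ((dist_le_Ico_sum_dist p hjm).trans hjK)
      have hstep : u (p (m + 1)) - u (p m) ≤ E := hloc _ _ (hp m (by omega))
      have hlen : ∑ i ∈ range j, d i + K ≤ ∑ i ∈ range (m + 1), d i := by
        rw [← sum_range_add_sum_Ico d (by omega : j ≤ m + 1), sum_Ico_succ_top hjm]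
        linarith
      have hK2 : 2 * E / K * K = 2 * E := div_mul_cancel₀ _ hK.ne'
      linarith [mul_le_mul_of_nonneg_left hlen hEK]
  obtain ⟨j, hjn, hjK, hj⟩ := anchor n le_rfl
  have hlast : u (p n) - u (p j) ≤ E := hloc _ _ ((dist_le_Ico_sum_dist p hjn).trans hjK)
  have hmono : ∑ i ∈ range j, d i ≤ ∑ i ∈ range n, d i :=
    sum_le_sum_of_subset_of_nonneg (range_subset_range.mpr hjn) fun i _ _ => hd i
  linarith [mul_le_mul_of_nonneg_left hmono hEK]

lemma IsBLengthSpaceAtScale.coarselyLipschitz {B K E : ℝ} (hlen : IsBLengthSpaceAtScale X B K)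
    (hK : 0 < K) (hE : 0 ≤ E) (hloc : ∀ a b, dist a b ≤ K → u b - u a ≤ E) :
    CoarselyLipschitz u := by
  refine ⟨E, 2 * E / K * |B|, by positivity, fun a b => ?_⟩
  obtain ⟨n, p, rfl, rfl, hsteps, hsum⟩ := hlen b a
  calc u (p n) - u (p 0)
      ≤ E + 2 * E / K * ∑ i ∈ range n, dist (p i) (p (i + 1)) := sub_le_of_chain hK hloc hsteps
    _ ≤ E + 2 * E / K * (|B| * dist (p n) (p 0)) := by
        gcongr
        rw [dist_comm]
        exact hsum.trans (mul_le_mul_of_nonneg_right (le_abs_self B) dist_nonneg)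
    _ = E + 2 * E / K * |B| * dist (p n) (p 0) := by ring

lemma Dominated.coarselyLipschitz {B K α : ℝ} (hlen : IsBLengthSpaceAtScale X B K) (hK : 0 < K)
    (hub : UniformlyBounded c) (hu : Dominated c α u) : CoarselyLipschitz u := by
  obtain ⟨A, hA⟩ := hub K
  exact hlen.coarselyLipschitz hK (le_max_right (A + α) 0) fun a b hab =>
    (hu a b).trans ((add_le_add_left (hA a b hab) α).trans (le_max_left _ _))

end CoarselyLipschitz

section LaxOleinik

open Function

variable {w : X → ℝ}

lemma Tp_eq_neg_Tm_swap (w : X → ℝ) (y : X) : Tp c w y = -Tm (swap c) (-w) y := by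
  rw [← mul_neg_one, Tm, Real.iInf_mul_of_nonpos (by norm_num), Tp]
  congr 1
  funext z
  simp only [Pi.neg_apply, swap]
  ring

lemma Dominated.le_Tm {α : ℝ} {u : X → ℝ} (hu : Dominated c α u) (y : X) :
    u y ≤ Tm c (fun z => u z + α) y :=
  have : Nonempty X := ⟨y⟩
  le_ciInf fun z => by linarith [hu z y]

variable [MetricSpace X]

lemma UniformlySuperlinear.swap (hsl : UniformlySuperlinear c) : UniformlySuperlinear (swap c) :=
  fun k hk => (hsl k hk).imp fun _ hC a b => by simpa [dist_comm] using hC b a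

lemma bddBelow_range_add_cost (hsl : UniformlySuperlinear c) (hw : CoarselyLipschitz w) (y : X) :
    BddBelow (Set.range fun z => w z + c z y) := by
  obtain ⟨M, L, hL, hML⟩ := hw
  obtain ⟨C, hC⟩ := hsl L hL
  refine ⟨w y - M - C, Set.forall_mem_range.2 fun z => ?_⟩
  have := hC z y
  rw [dist_comm] at this
  linarith [hML y z]

lemma Tm_le (hsl : UniformlySuperlinear c) (hw : CoarselyLipschitz w) (y z : X) :
    Tm c w y ≤ w z + c z y :=
  ciInf_le (bddBelow_range_add_cost hsl hw y) z

/-- Superlinearity confines the infimum defining `Tm c w y`, for `y` near `x₀`, to a ball. -/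
lemma exists_Tm_le_of_lt_dist (hsl : UniformlySuperlinear c) (hw : CoarselyLipschitz w) (x₀ : X) :
    ∃ R, ∀ y, dist y x₀ ≤ 1 → ∀ z, R < dist z x₀ → Tm c w x₀ ≤ w z + c z y := by
  obtain ⟨M, L, hL, hML⟩ := hw
  obtain ⟨C, hC⟩ := hsl (L + 1) (by linarith)
  refine ⟨M + c x₀ x₀ + L + 1 + C, fun y hy z hz => ?_⟩
  have hzy : (L + 1) * (dist z x₀ - 1) ≤ (L + 1) * dist z y := by
    gcongr
    linarith [dist_triangle z y x₀]
  have hw₀ := hML x₀ z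
  rw [dist_comm] at hw₀
  linarith [Tm_le hsl ⟨M, L, hL, hML⟩ x₀ x₀, hC z y]

lemma upperSemicontinuous_Tm (hcont : Continuous fun q : X × X => c q.1 q.2)
    (hsl : UniformlySuperlinear c) (hw : CoarselyLipschitz w) : UpperSemicontinuous (Tm c w) :=
  upperSemicontinuous_ciInf (bddBelow_range_add_cost hsl hw) fun _ =>
    (continuous_const.add (hcont.comp (continuous_const.prodMk continuous_id))).upperSemicontinuous

lemma lowerSemicontinuous_Tm [ProperSpace X] (hcont : Continuous fun q : X × X => c q.1 q.2)
    (hsl : UniformlySuperlinear c) (hw : CoarselyLipschitz w) : LowerSemicontinuous (Tm c w) := by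
  intro x₀ t ht
  have : Nonempty X := ⟨x₀⟩
  obtain ⟨R, hR⟩ := exists_Tm_le_of_lt_dist hsl hw x₀
  have hunif :
      TendstoUniformlyOn (fun y z => c z y) (fun z => c z x₀) (𝓝 x₀) (closedBall x₀ R) := by
    have hK := (isCompact_closedBall x₀ 1).prod (isCompact_closedBall x₀ R)
    have huc : UniformContinuousOn (↿fun y z : X => c z y) (closedBall x₀ 1 ×ˢ closedBall x₀ R) :=
      hK.uniformContinuousOn_of_continuous (hcont.comp continuous_swap).continuousOn
    simpa only [nhdsWithin_eq_nhds.2 (closedBall_mem_nhds x₀ one_pos)] using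
      huc.tendstoUniformlyOn (mem_closedBall_self zero_le_one)
  set ε := Tm c w x₀ - t
  filter_upwards [Metric.tendstoUniformlyOn_iff.1 hunif (ε / 2) (by simp only [ε]; linarith),
    closedBall_mem_nhds x₀ one_pos] with y hclose hy
  have : Tm c w x₀ - ε / 2 ≤ Tm c w y := by
    refine le_ciInf fun z => ?_
    by_cases hz : z ∈ closedBall x₀ R
    · have := hclose z hz
      rw [Real.dist_eq, abs_lt] at this
      linarith [Tm_le hsl hw x₀ z]
    · linarith [hR y hy z (lt_of_not_ge hz)]
  linarith

lemma continuous_Tm [ProperSpace X] (hcont : Continuous fun q : X × X => c q.1 q.2)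
    (hsl : UniformlySuperlinear c) (hw : CoarselyLipschitz w) : Continuous (Tm c w) :=
  continuous_iff_lower_upperSemicontinuous.2
    ⟨lowerSemicontinuous_Tm hcont hsl hw, upperSemicontinuous_Tm hcont hsl hw⟩

lemma le_Tp (hsl : UniformlySuperlinear c) (hw : CoarselyLipschitz w) (y z : X) :
    w z - c y z ≤ Tp c w y := by
  have := Tm_le hsl.swap hw.neg y z
  rw [Tp_eq_neg_Tm_swap]
  simp only [Pi.neg_apply, swap] at this
  linarith

lemma continuous_Tp [ProperSpace X] (hcont : Continuous fun q : X × X => c q.1 q.2)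
    (hsl : UniformlySuperlinear c) (hw : CoarselyLipschitz w) : Continuous (Tp c w) := by
  rw [show Tp c w = fun y => -Tm (swap c) (-w) y from funext (Tp_eq_neg_Tm_swap w)]
  exact (continuous_Tm (c := swap c) (hcont.comp continuous_swap) hsl.swap hw.neg).neg

lemma Dominated.Tm_add {α : ℝ} {u : X → ℝ} (hu : Dominated c α u) (hsl : UniformlySuperlinear c)
    (hcl : CoarselyLipschitz u) : Dominated c α (Tm c fun z => u z + α) := fun a b => by
  linarith [Tm_le hsl (hcl.add_const α) b a, hu.le_Tm a]

end LaxOleinik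

section Approximation

variable [MetricSpace X]

lemma Dominated.min_cone {α ε N r : ℝ} {v : X → ℝ} {x : X} (hv : Dominated c α v) (hN : 0 ≤ N)
    (hnear : ∀ a, dist x a < r → ∀ b, v b ≤ c a b + α + ε)
    (hfar : ∀ y, r ≤ dist x y → v y ≤ ε + N * dist x y) :
    Dominated c α fun y => min (v y) (ε + N * dist x y) := by
  intro a b
  dsimp only
  have hb := min_le_left (v b) (ε + N * dist x b)
  rcases le_or_gt (v a) (ε + N * dist x a) with ha | ha
  · rw [min_eq_left ha]
    linarith [hv a b]
  · have hxa : dist x a < r := lt_of_not_ge fun h => (hfar a h).not_gt ha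
    rw [min_eq_right ha.le]
    linarith [hnear a hxa b, mul_nonneg hN (dist_nonneg (x := x) (y := a))]

lemma CoarselyLipschitz.exists_le_mul_dist {w : X → ℝ} (hw : CoarselyLipschitz w) (x : X) {r : ℝ}
    (hr : 0 < r) : ∃ N, 0 ≤ N ∧ ∀ y, r ≤ dist x y → w y ≤ N * dist x y := by
  obtain ⟨M, L, hL, hML⟩ := hw
  refine ⟨L + |w x + M| / r, by positivity, fun y hy => ?_⟩
  have hgrow : |w x + M| ≤ |w x + M| / r * dist x y := by
    rw [div_mul_eq_mul_div, le_div_iff₀ hr]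
    exact mul_le_mul_of_nonneg_left hy (abs_nonneg _)
  have := hML y x
  rw [dist_comm] at this
  linarith [le_abs_self (w x + M)]

lemma Tm_chainPot_eq_of_ne (hsl : UniformlySuperlinear c) {x y : X}
    (hcl : CoarselyLipschitz (chainPot c x)) (hyx : y ≠ x) :
    Tm c (fun z => chainPot c x z + critValue c) y = chainPot c x y := by
  refine le_antisymm (le_csInf (chainCosts_nonempty x y) fun r hr => ?_)
    ((dominated_chainPot hsl x).le_Tm y)
  obtain ⟨z, r', hr', rfl⟩ := exists_mem_chainCosts_of_ne hr hyx
  linarith [Tm_le hsl (hcl.add_const (critValue c)) y z, chainPot_le hsl hr']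

theorem exists_continuous_dominated_eq_mane_of_le_dist [ProperSpace X] {B K : ℝ} (hK : 0 < K)
    (hlen : IsBLengthSpaceAtScale X B K) (hcont : Continuous fun q : X × X => c q.1 q.2)
    (hsl : UniformlySuperlinear c) (hub : UniformlyBounded c) (x : X) {ε : ℝ} (hε : 0 < ε) :
    ∃ g : X → ℝ, Continuous g ∧ Dominated c (critValue c) g ∧ 0 ≤ g x ∧ g x ≤ ε ∧
      ∀ y, ε ≤ dist x y → g y = mane c x y := by
  set α₀ := critValue c
  have hpot := dominated_chainPot hsl x
  have hpot_cl := hpot.coarselyLipschitz hlen hK hub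
  set v := Tm c fun z => chainPot c x z + α₀
  have hv_dom : Dominated c α₀ v := hpot.Tm_add hsl hpot_cl
  have hv_cl := hv_dom.coarselyLipschitz hlen hK hub
  have hv_x : 0 ≤ v x := chainPot_self hsl x ▸ hpot.le_Tm x
  have hP_x : Tp c v x ≤ α₀ := by
    have : Nonempty X := ⟨x⟩
    refine ciSup_le fun z => ?_
    linarith [Tm_le hsl (hpot_cl.add_const α₀) z x, chainPot_self hsl x]
  obtain ⟨δ, hδ, hP_near⟩ :=
    Metric.continuousAt_iff.1 (continuous_Tp hcont hsl hv_cl).continuousAt ε hε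
  have hr : 0 < min δ ε := lt_min hδ hε
  obtain ⟨N, hN, hv_far⟩ := hv_cl.exists_le_mul_dist x hr
  have hnear : ∀ a, dist x a < min δ ε → ∀ b, v b ≤ c a b + α₀ + ε := fun a ha b => by
    have := hP_near (by rw [dist_comm]; exact ha.trans_le (min_le_left _ _))
    rw [Real.dist_eq, abs_lt] at this
    linarith [le_Tp hsl hv_cl a b]
  have hfar : ∀ y, min δ ε ≤ dist x y → v y ≤ ε + N * dist x y := fun y hy => by
    linarith [hv_far y hy]
  refine ⟨fun y => min (v y) (ε + N * dist x y),
    (continuous_Tm hcont hsl (hpot_cl.add_const α₀)).min (by fun_prop),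
    hv_dom.min_cone hN hnear hfar, by simp [hv_x, hε.le], by simp, fun y hy => ?_⟩
  have hyx : y ≠ x := (dist_pos.1 (hε.trans_le hy)).symm
  dsimp only
  rw [min_eq_left (hfar y ((min_le_right _ _).trans hy)), mane_eq_chainPot hsl]
  exact Tm_chainPot_eq_of_ne hsl hpot_cl hyx

end Approximation

end CostFunctions

lemma tendstoUniformlyOn_compl_of_eq_off_ball {X β : Type*} [MetricSpace X] [UniformSpace β]
    {F : ℕ → X → β} {f : X → β} {x : X}
    (hF : ∀ (n : ℕ) y, 1 / ((n : ℝ) + 1) ≤ dist x y → F n y = f y) {V : Set X} (hV : V ∈ 𝓝 x) :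
    TendstoUniformlyOn F f atTop Vᶜ := by
  obtain ⟨ρ, hρ, hball⟩ := Metric.mem_nhds_iff.1 hV
  obtain ⟨n₀, hn₀⟩ := exists_nat_one_div_lt hρ
  intro U hU
  filter_upwards [eventually_ge_atTop n₀] with n hn y hy
  rw [hF n y ?_]
  · exact refl_mem_uniformity hU
  have hyρ : ρ ≤ dist x y := by
    by_contra h
    exact hy (hball (by rw [mem_ball, dist_comm]; exact lt_of_not_ge h))
  refine le_trans ?_ (hn₀.le.trans hyρ)
  gcongr

theorem mane_potential_limit_of_continuous_subsolutions_general {X : Type*} [MetricSpace X] [ProperSpace X]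
    {B K : ℝ} (hK : 0 < K) (hlen : IsBLengthSpaceAtScale X B K)
    {c : X → X → ℝ} (hcont : Continuous fun q : X × X => c q.1 q.2)
    (hsl : UniformlySuperlinear c) (hub : UniformlyBounded c) (x : X) :
    (∃ u : ℕ → X → ℝ,
      (∀ n : ℕ, Continuous (u n) ∧ Dominated c (critValue c) (u n)) ∧
      ∀ y : X, Tendsto (fun n => u n y) atTop (𝓝 (mane c x y))) ∧
    (∀ V ∈ 𝓝 x, ∃ u : ℕ → X → ℝ,
      (∀ n : ℕ, Continuous (u n) ∧ Dominated c (critValue c) (u n)) ∧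
      (∀ y : X, Tendsto (fun n => u n y) atTop (𝓝 (mane c x y))) ∧
      TendstoUniformlyOn u (mane c x) atTop Vᶜ) := by
  choose g hg_cont hg_dom hg_nonneg hg_le hg_eq using fun n : ℕ =>
    exists_continuous_dominated_eq_mane_of_le_dist hK hlen hcont hsl hub x
      (Nat.one_div_pos_of_nat (n := n))
  have h_unif : ∀ V ∈ 𝓝 x, TendstoUniformlyOn g (mane c x) atTop Vᶜ :=
    fun V hV => tendstoUniformlyOn_compl_of_eq_off_ball hg_eq hV
  have h_ptwise : ∀ y, Tendsto (fun n => g n y) atTop (𝓝 (mane c x y)) := by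
    intro y
    rcases eq_or_ne y x with rfl | hyx
    · rw [mane_eq_chainPot hsl, chainPot_self hsl]
      exact squeeze_zero hg_nonneg hg_le tendsto_one_div_add_atTop_nhds_zero_nat
    · exact (h_unif {y}ᶜ (compl_singleton_mem_nhds hyx.symm)).tendsto_at (by simp)
  have h_sub : ∀ n, Continuous (g n) ∧ Dominated c (critValue c) (g n) :=
    fun n => ⟨hg_cont n, hg_dom n⟩
  exact ⟨⟨g, h_sub, h_ptwise⟩, fun V hV => ⟨g, h_sub, h_ptwise, h_unif V hV⟩⟩

theorem mane_potential_limit_of_continuous_subsolutions {X : Type*} [MetricSpace X] [Nonempty X] [ProperSpace X]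
    {B K : ℝ} (hB : 1 ≤ B) (hK : 0 < K) (hlen : IsBLengthSpaceAtScale X B K)
    {c : X → X → ℝ} (hcont : Continuous fun q : X × X => c q.1 q.2)
    (hsl : UniformlySuperlinear c) (hub : UniformlyBounded c) (x : X) :
    (∃ u : ℕ → X → ℝ,
      (∀ n : ℕ, Continuous (u n) ∧ Dominated c (critValue c) (u n)) ∧
      ∀ y : X, Tendsto (fun n => u n y) atTop (𝓝 (mane c x y))) ∧
    (∀ V ∈ 𝓝 x, ∃ u : ℕ → X → ℝ,
      (∀ n : ℕ, Continuous (u n) ∧ Dominated c (critValue c) (u n)) ∧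
      (∀ y : X, Tendsto (fun n => u n y) atTop (𝓝 (mane c x y))) ∧
      TendstoUniformlyOn u (mane c x) atTop Vᶜ) :=
  mane_potential_limit_of_continuous_subsolutions_general hK hlen hcont hsl hub x
end

section
/- For every integer n ≥ 1: the function φ_n is upper semi-continuous on X × X; for every x ∈ X the function φ_{n,x} = φ_n(x,·) is a critical sub-solution; and T⁻φ_{n,x} + α[0] = φ_{n+1,x}. -/
open Metric Set Filter Topology

/-! Every critical sub-solution `u` satisfies `u y - u x ≤ c_k(x,y) + k α[0]`, so all the infima
defining `φ_n` are infima of sets bounded below, and a critical sub-solution exists: it is a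
pointwise `liminf` of normalized `(α[0] + 1/(m+1))`-dominated functions.

Fixing the interior points of a chain, its cost is continuous in the endpoints; `c_k` is the
infimum of these costs and `φ_n` an infimum of the `c_k + k α[0]`, hence both are upper
semi-continuous. Splitting off the last step of a chain gives `c_{k+1}(x,z) = inf_y c_k(x,y) + c(y,z)`,
which yields `T⁻ φ_{n,x} + α[0] = φ_{n+1,x}`; as `φ_n ≤ φ_{n+1}`, the same inequality shows that
`φ_{n,x}` is critically dominated. -/

open Function

section CriticalSubsolution

variable {X : Type*} {c : X → X → ℝ} {α : ℝ}

theorem dominated_liminf {ι : Type*} {l : Filter ι} [l.NeBot] {v : ι → X → ℝ} {ε : ι → ℝ}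
    (hε : Tendsto ε l (𝓝 0)) (hv : ∀ m, Dominated c (α + ε m) (v m))
    (hle : ∀ y, IsBoundedUnder (· ≤ ·) l fun m => v m y)
    (hge : ∀ y, IsBoundedUnder (· ≥ ·) l fun m => v m y) :
    Dominated c α fun y => liminf (fun m => v m y) l := by
  intro x y
  set w := fun m => c x y + α + ε m
  have hw : Tendsto w l (𝓝 (c x y + α)) := by
    simpa using tendsto_const_nhds.add hε
  have hstep : ∀ m, v m y ≤ (w + fun m => v m x) m := fun m => by
    have := hv m x y
    simp only [w, Pi.add_apply]
    linarith
  have := calc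
    liminf (fun m => v m y) l ≤ liminf (w + fun m => v m x) l :=
      liminf_le_liminf (Eventually.of_forall hstep) (hge y)
        (isBoundedUnder_le_add hw.isBoundedUnder_le (hle x)).isCoboundedUnder_ge
    _ ≤ limsup w l + liminf (fun m => v m x) l :=
      liminf_add_le hw.isBoundedUnder_ge hw.isBoundedUnder_le (hge x) (hle x).isCoboundedUnder_ge
    _ = c x y + α + liminf (fun m => v m x) l := by rw [hw.limsup_eq]
  linarith

variable [MetricSpace X]

theorem UniformlySuperlinear.exists_dominated (hsl : UniformlySuperlinear c) :
    ∃ α : ℝ, ∃ u : X → ℝ, Dominated c α u := by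
  obtain ⟨C, hC⟩ := hsl 0 le_rfl
  exact ⟨C, fun _ => 0, fun x y => by linarith [hC x y]⟩

theorem UniformlySuperlinear.exists_dominated_critValue [Nonempty X]
    (hsl : UniformlySuperlinear c) : ∃ u : X → ℝ, Dominated c (critValue c) u := by
  obtain ⟨x₀⟩ := ‹Nonempty X›
  set ε : ℕ → ℝ := fun m => 1 / (m + 1)
  have hε_le : ∀ m, ε m ≤ 1 := fun m =>
    div_le_one_of_le₀ (by linarith [(m.cast_nonneg : (0 : ℝ) ≤ m)]) (by positivity)
  have hv : ∀ m, ∃ v : X → ℝ, Dominated c (critValue c + ε m) v ∧ v x₀ = 0 := fun m => by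
    obtain ⟨a, ⟨u, hu⟩, ha⟩ := exists_lt_of_csInf_lt hsl.exists_dominated
      (lt_add_of_pos_right (critValue c) (by positivity : 0 < ε m))
    exact ⟨fun y => u y - u x₀, fun x y => by linarith [hu x y], sub_self _⟩
  choose v hv hv₀ using hv
  refine ⟨_, dominated_liminf tendsto_one_div_add_atTop_nhds_zero_nat hv
    (fun y => isBoundedUnder_of ⟨c x₀ y + critValue c + 1, fun m => ?_⟩)
    (fun y => isBoundedUnder_of ⟨-c y x₀ - critValue c - 1, fun m => ?_⟩)⟩
  · linarith [hv m x₀ y, hv₀ m, hε_le m]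
  · linarith [hv m y x₀, hv₀ m, hε_le m]

end CriticalSubsolution

section Chains

variable {X : Type*} {c : X → X → ℝ} {α : ℝ} {u : X → ℝ}

def chainCost (c : X → X → ℝ) (k : ℕ) (p : ℕ → X) : ℝ :=
  ∑ i ∈ Finset.range k, c (p i) (p (i + 1))

theorem chainCost_succ (k : ℕ) (p : ℕ → X) :
    chainCost c (k + 1) p = chainCost c k p + c (p k) (p (k + 1)) :=
  Finset.sum_range_succ _ _

theorem Dominated.sub_le_chainCost (hu : Dominated c α u) (k : ℕ) (p : ℕ → X) :
    u (p k) - u (p 0) - k * α ≤ chainCost c k p := by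
  have := Finset.sum_le_sum fun i (_ : i ∈ Finset.range k) =>
    (sub_le_iff_le_add.2 (hu (p i) (p (i + 1))) : _ ≤ _)
  rw [Finset.sum_sub_distrib, Finset.sum_range_sub (fun i => u (p i))] at this
  simpa [chainCost, mul_comm] using this

theorem Dominated.cChain_le_chainCost (hu : Dominated c α u) (k : ℕ) (p : ℕ → X) :
    cChain c k (p 0) (p k) ≤ chainCost c k p :=
  csInf_le ⟨u (p k) - u (p 0) - k * α, by
    rintro _ ⟨q, hq₀, hqk, rfl⟩
    rw [← hq₀, ← hqk]
    exact hu.sub_le_chainCost k q⟩ ⟨p, rfl, rfl, rfl⟩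

theorem le_cChain {k : ℕ} (hk : k ≠ 0) {x y : X} {b : ℝ}
    (h : ∀ p : ℕ → X, p 0 = x → p k = y → b ≤ chainCost c k p) : b ≤ cChain c k x y :=
  le_csInf ⟨_, fun i => if i = 0 then x else y, rfl, if_neg hk, rfl⟩ <| by
    rintro _ ⟨p, hp₀, hpk, rfl⟩
    exact h p hp₀ hpk

theorem Dominated.sub_le_cChain (hu : Dominated c α u) {k : ℕ} (hk : k ≠ 0) (x y : X) :
    u y - u x - k * α ≤ cChain c k x y :=
  le_cChain hk fun p hp₀ hpk => hp₀ ▸ hpk ▸ hu.sub_le_chainCost k p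

theorem Dominated.cChain_succ_le (hu : Dominated c α u) {k : ℕ} (hk : k ≠ 0) (x y z : X) :
    cChain c (k + 1) x z ≤ cChain c k x y + c y z := by
  suffices cChain c (k + 1) x z - c y z ≤ cChain c k x y by linarith
  refine le_cChain hk fun p hp₀ hpk => ?_
  set q := update p (k + 1) z
  have hq : ∀ i ≤ k, q i = p i := fun i hi => update_of_ne (by omega) _ _
  have hcost : chainCost c k q = chainCost c k p :=
    Finset.sum_congr rfl fun i hi => by
      rw [hq i (by simp at hi; omega), hq (i + 1) (by simp at hi; omega)]
  have := hu.cChain_le_chainCost (k + 1) q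
  rw [chainCost_succ, hcost, hq 0 (Nat.zero_le k), hq k le_rfl, hp₀, hpk] at this
  simp only [q, update_self] at this
  linarith

theorem cChain_eq_iInf {k : ℕ} (hk : k ≠ 0) (x y : X) :
    cChain c k x y = ⨅ p : ℕ → X, chainCost c k (update (update p 0 x) k y) := by
  refine congrArg sInf (Set.ext fun r => ⟨?_, ?_⟩)
  · rintro ⟨p, hp₀, hpk, rfl⟩
    refine ⟨p, ?_⟩
    simp only [← hp₀, ← hpk, update_eq_self]
    rfl
  · rintro ⟨p, rfl⟩
    exact ⟨_, by rw [update_of_ne (Ne.symm hk), update_self], update_self .., rfl⟩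

theorem Dominated.upperSemicontinuous_cChain [TopologicalSpace X]
    (hcont : Continuous fun q : X × X => c q.1 q.2) (hu : Dominated c α u) {k : ℕ} (hk : k ≠ 0) :
    UpperSemicontinuous fun q : X × X => cChain c k q.1 q.2 := by
  simp only [cChain_eq_iInf hk]
  refine upperSemicontinuous_ciInf (fun q => ⟨u q.2 - u q.1 - k * α, ?_⟩) fun p => ?_
  · rintro _ ⟨p, rfl⟩
    simpa [update_of_ne (Ne.symm hk)] using hu.sub_le_chainCost k (update (update p 0 q.1) k q.2)
  · have hends : Continuous fun q : X × X => update (update p 0 q.1) k q.2 :=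
      ((continuous_const (y := p)).update 0 continuous_fst).update k continuous_snd
    exact (continuous_finsetSum _ fun i _ =>
      hcont.comp ((continuous_apply i).comp hends |>.prodMk
        ((continuous_apply (i + 1)).comp hends))).upperSemicontinuous

end Chains

section Potentials

variable {X : Type*} {c : X → X → ℝ} {α : ℝ} {u : X → ℝ} {n : ℕ}

theorem phiN_eq_iInf (n : ℕ) (x y : X) :
    phiN c α n x y = ⨅ k : {k : ℕ // n ≤ k}, cChain c k x y + k * α :=
  congrArg sInf <| Set.ext fun _ =>
    ⟨fun ⟨k, hk, h⟩ => ⟨⟨k, hk⟩, h.symm⟩, fun ⟨k, h⟩ => ⟨k, k.2, h.symm⟩⟩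

theorem le_phiN {x y : X} {b : ℝ} (h : ∀ k, n ≤ k → b ≤ cChain c k x y + k * α) :
    b ≤ phiN c α n x y :=
  le_csInf ⟨_, n, le_rfl, rfl⟩ fun _ ⟨k, hk, hr⟩ => hr ▸ h k hk

theorem Dominated.bddBelow_range_cChain (hu : Dominated c α u) (hn : n ≠ 0) (x y : X) :
    BddBelow (Set.range fun k : {k : ℕ // n ≤ k} => cChain c k x y + k * α) :=
  ⟨u y - u x, by
    rintro _ ⟨k, rfl⟩
    linarith [hu.sub_le_cChain (k := k) (by have := k.2; omega) x y]⟩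

theorem Dominated.phiN_le (hu : Dominated c α u) (hn : n ≠ 0) {k : ℕ} (hk : n ≤ k) (x y : X) :
    phiN c α n x y ≤ cChain c k x y + k * α := by
  rw [phiN_eq_iInf]
  exact ciInf_le (hu.bddBelow_range_cChain hn x y) ⟨k, hk⟩

theorem Dominated.sub_le_phiN (hu : Dominated c α u) (hn : n ≠ 0) (x y : X) :
    u y - u x ≤ phiN c α n x y :=
  le_phiN fun k hk => by linarith [hu.sub_le_cChain (k := k) (by omega) x y]

theorem Dominated.phiN_le_phiN_succ (hu : Dominated c α u) (hn : n ≠ 0) (x y : X) :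
    phiN c α n x y ≤ phiN c α (n + 1) x y :=
  le_phiN fun _ hk => hu.phiN_le hn (Nat.le_of_succ_le hk) x y

theorem Dominated.phiN_succ_le (hu : Dominated c α u) (hn : n ≠ 0) (x y z : X) :
    phiN c α (n + 1) x z ≤ phiN c α n x y + c y z + α := by
  suffices phiN c α (n + 1) x z - c y z - α ≤ phiN c α n x y by linarith
  refine le_phiN fun k hk => ?_
  have h₁ := hu.phiN_le (Nat.succ_ne_zero n) (Nat.succ_le_succ hk) x z
  have h₂ := hu.cChain_succ_le (k := k) (by omega) x y z
  push_cast at h₁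
  linarith

theorem Dominated.upperSemicontinuous_phiN [TopologicalSpace X]
    (hcont : Continuous fun q : X × X => c q.1 q.2) (hu : Dominated c α u) (hn : n ≠ 0) :
    UpperSemicontinuous fun q : X × X => phiN c α n q.1 q.2 := by
  simp only [phiN_eq_iInf]
  exact upperSemicontinuous_ciInf (fun q => hu.bddBelow_range_cChain hn q.1 q.2) fun k =>
    (hu.upperSemicontinuous_cChain hcont (k := k) (by have := k.2; omega)).add
      continuous_const.upperSemicontinuous

theorem Dominated.dominated_phiN (hu : Dominated c α u) (hn : n ≠ 0) (x : X) :
    Dominated c α (phiN c α n x) := fun y z => by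
  linarith [hu.phiN_le_phiN_succ hn x z, hu.phiN_succ_le hn x y z]

theorem Dominated.tm_phiN_add [Nonempty X] (hu : Dominated c α u) (hn : n ≠ 0) (x z : X) :
    Tm c (phiN c α n x) z + α = phiN c α (n + 1) x z := by
  have hbdd : BddBelow (Set.range fun y => phiN c α n x y + c y z) :=
    ⟨u z - u x - α, by
      rintro _ ⟨y, rfl⟩
      linarith [hu.sub_le_phiN hn x y, hu y z]⟩
  refine le_antisymm (le_phiN fun k hk => ?_) ?_
  · obtain ⟨m, rfl⟩ : ∃ m, k = m + 1 := ⟨k - 1, by omega⟩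
    suffices Tm c (phiN c α n x) z - m * α ≤ cChain c (m + 1) x z by push_cast; linarith
    refine le_cChain (Nat.succ_ne_zero m) fun p hp₀ hpk => ?_
    have h₁ : Tm c (phiN c α n x) z ≤ phiN c α n x (p m) + c (p m) z := ciInf_le hbdd (p m)
    have h₂ := hu.phiN_le hn (by omega : n ≤ m) x (p m)
    have h₃ := hu.cChain_le_chainCost m p
    rw [hp₀] at h₃
    rw [chainCost_succ, hpk]
    linarith
  · have : phiN c α (n + 1) x z - α ≤ Tm c (phiN c α n x) z :=
      le_ciInf fun y => by linarith [hu.phiN_succ_le hn x y z]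
    linarith

end Potentials

theorem phiN_properties_general {X : Type*} [MetricSpace X] [Nonempty X]
    {c : X → X → ℝ} (hcont : Continuous fun q : X × X => c q.1 q.2)
    (hsl : UniformlySuperlinear c) (n : ℕ) (hn : 1 ≤ n) :
    UpperSemicontinuous (fun q : X × X => phiN c (critValue c) n q.1 q.2) ∧
    (∀ x : X, Dominated c (critValue c) (phiN c (critValue c) n x)) ∧
    (∀ x y : X, Tm c (phiN c (critValue c) n x) y + critValue c =
      phiN c (critValue c) (n + 1) x y) := by
  obtain ⟨u, hu⟩ := hsl.exists_dominated_critValue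
  have hn₀ : n ≠ 0 := Nat.one_le_iff_ne_zero.mp hn
  exact ⟨hu.upperSemicontinuous_phiN hcont hn₀, hu.dominated_phiN hn₀, hu.tm_phiN_add hn₀⟩

theorem phiN_properties {X : Type*} [MetricSpace X] [Nonempty X] [ProperSpace X]
    {B K : ℝ} (hB : 1 ≤ B) (hK : 0 < K) (hlen : IsBLengthSpaceAtScale X B K)
    {c : X → X → ℝ} (hcont : Continuous fun q : X × X => c q.1 q.2)
    (hsl : UniformlySuperlinear c) (hub : UniformlyBounded c) (n : ℕ) (hn : 1 ≤ n) :
    UpperSemicontinuous (fun q : X × X => phiN c (critValue c) n q.1 q.2) ∧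
    (∀ x : X, Dominated c (critValue c) (phiN c (critValue c) n x)) ∧
    (∀ x y : X, Tm c (phiN c (critValue c) n x) y + critValue c =
      phiN c (critValue c) (n + 1) x y) :=
  phiN_properties_general hcont hsl n hn
end
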